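/- Let K be a finite field with q elements and fix integers d, r ≥ 1 and n ≥ 0. Then q^{d n² + r n} = Σ_{k=0}^{n} c_q(k,n) · q^{d·n·(n−k)} · u_k, where u_k is the number of full-span tuples on K^k and c_q(k,n) is the number of k-dimensional K-subspaces of K^n. (This is the point-count of the stratification of the affine space End_K(K^n)^d × (K^n)^r by the dimension of the span.) -/

import Mathlib

/-- `tupleSpan K T v` is the `K`-linear span of all vectors of the form
`T i₁ ∘ ⋯ ∘ T iₘ (v j)`, where `m ≥ 0` and `1 ≤ j ≤ r`. -/
def tupleSpan (K : Type*) {V : Type*} [Field K] [AddCommGroup V] [Module K V]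
    {d r : ℕ} (T : Fin d → Module.End K V) (v : Fin r → V) : Submodule K V :=
  Submodule.span K {w | ∃ (l : List (Fin d)) (j : Fin r), w = ((l.map T).prod) (v j)}

/-- The number `u_k` of full-span tuples on `K^k`. -/
noncomputable def fullSpanCount (K : Type*) [Field K] (d r k : ℕ) : ℕ :=
  Nat.card {y : (Fin d → Module.End K (Fin k → K)) × (Fin r → (Fin k → K)) //
    tupleSpan K y.1 y.2 = ⊤}

/-!
The span `S` of a tuple `(T, v)` is the smallest subspace containing every `v j` and stable
under every `T i`. Fixing a complement `C` of `S`, a tuple of span `S` is the same thing as a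
full-span tuple on `S` together with the arbitrary maps `T i ∘ C.subtype : C → Kⁿ`. Hence the
tuples of span `S` are `q^(d·n·(n-k)) · u_k` in number, `k = dim S`, and summing over all
subspaces `S` counts all `q^(dn² + rn)` tuples.
-/

open Module

section TupleSpan

variable {K V W : Type*} [Field K] [AddCommGroup V] [Module K V] [AddCommGroup W] [Module K W]
  {d r : ℕ}

lemma apply_mem_tupleSpan (T : Fin d → Module.End K V) (v : Fin r → V) (l : List (Fin d))
    (j : Fin r) : (l.map T).prod (v j) ∈ tupleSpan K T v :=
  Submodule.subset_span ⟨l, j, rfl⟩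

lemma vec_mem_tupleSpan (T : Fin d → Module.End K V) (v : Fin r → V) (j : Fin r) :
    v j ∈ tupleSpan K T v :=
  apply_mem_tupleSpan T v [] j

lemma tupleSpan_le_comap (T : Fin d → Module.End K V) (v : Fin r → V) (i : Fin d) :
    tupleSpan K T v ≤ (tupleSpan K T v).comap (T i) :=
  Submodule.span_le.mpr fun _ ⟨l, j, hw⟩ => hw ▸ apply_mem_tupleSpan T v (i :: l) j

lemma map_tupleSpan {T : Fin d → Module.End K V} {A : Fin d → Module.End K W} (ι : W →ₗ[K] V)
    (hι : ∀ i, T i ∘ₗ ι = ι ∘ₗ A i) (w : Fin r → W) :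
    (tupleSpan K A w).map ι = tupleSpan K T (fun j => ι (w j)) := by
  have hword : ∀ (l : List (Fin d)) (x : W), ι ((l.map A).prod x) = (l.map T).prod (ι x) := by
    intro l
    induction l with
    | nil => simp
    | cons i l ih =>
      simp only [List.map_cons, List.prod_cons, Module.End.mul_apply, ← ih]
      exact fun x => (LinearMap.congr_fun (hι i) _).symm
  rw [tupleSpan, tupleSpan, Submodule.map_span]
  congr 1
  ext x
  simp only [Set.mem_image, Set.mem_ofPred_eq]
  constructor
  · rintro ⟨_, ⟨l, j, rfl⟩, rfl⟩
    exact ⟨l, j, hword l (w j)⟩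
  · rintro ⟨l, j, rfl⟩
    exact ⟨_, ⟨l, j, rfl⟩, hword l (w j)⟩

lemma tupleSpan_conj_eq_top_iff (e : W ≃ₗ[K] V) (A : Fin d → Module.End K W) (w : Fin r → W) :
    tupleSpan K (fun i => e.conj (A i)) (fun j => e (w j)) = ⊤ ↔ tupleSpan K A w = ⊤ := by
  have hmap := map_tupleSpan (T := fun i => e.conj (A i)) (A := A) (e : W →ₗ[K] V)
    (fun i => by ext; simp [LinearEquiv.conj_apply]) w
  rw [LinearEquiv.coe_coe] at hmap
  rw [← hmap, Submodule.map_eq_top_iff]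

end TupleSpan

abbrev TupleStratum (K : Type*) {V : Type*} [Field K] [AddCommGroup V] [Module K V] (d r : ℕ)
    (S : Submodule K V) : Type _ :=
  {y : (Fin d → Module.End K V) × (Fin r → V) // tupleSpan K y.1 y.2 = S}

section TupleStratum

variable {K V W : Type*} [Field K] [AddCommGroup V] [Module K V] [AddCommGroup W] [Module K W]
  {d r : ℕ}

lemma card_tupleStratum_top [FiniteDimensional K W] {k : ℕ} (hk : finrank K W = k) :
    Nat.card (TupleStratum K d r (⊤ : Submodule K W)) = fullSpanCount K d r k := by
  let e : W ≃ₗ[K] (Fin k → K) := (finBasisOfFinrankEq K W hk).equivFun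
  exact Nat.card_congr <| Equiv.subtypeEquiv
    ((Equiv.piCongrRight fun _ => e.conj.toEquiv).prodCongr (Equiv.piCongrRight fun _ => e.toEquiv))
    fun y => (tupleSpan_conj_eq_top_iff e y.1 y.2).symm

noncomputable def tupleStratumEquiv {S C : Submodule K V} (hSC : IsCompl S C) :
    TupleStratum K d r S ≃ TupleStratum K d r (⊤ : Submodule K S) × (Fin d → C →ₗ[K] V) where
  toFun y :=
    have hT (i : Fin d) : ∀ x ∈ S, y.1.1 i x ∈ S :=
      fun _ hx => y.2.le (tupleSpan_le_comap _ _ i (y.2.ge hx))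
    have hv (j : Fin r) : y.1.2 j ∈ S := y.2.le (vec_mem_tupleSpan _ _ j)
    (⟨(fun i => (y.1.1 i).restrict (hT i), fun j => ⟨y.1.2 j, hv j⟩), by
      apply Submodule.map_injective_of_injective S.injective_subtype
      rw [map_tupleSpan S.subtype (fun i => (LinearMap.subtype_comp_restrict (hT i)).symm),
        Submodule.map_top, Submodule.range_subtype]
      exact y.2⟩,
     fun i => y.1.1 i ∘ₗ C.subtype)
  invFun z :=
    ⟨(fun i => LinearMap.ofIsCompl hSC (S.subtype ∘ₗ z.1.1.1 i) (z.2 i), fun j => z.1.1.2 j), by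
      refine (map_tupleSpan (A := z.1.1.1) S.subtype (fun i => by ext; simp) z.1.1.2).symm.trans
        ?_
      rw [z.1.2, Submodule.map_top, Submodule.range_subtype]⟩
  left_inv y := Subtype.ext <| Prod.ext
    (funext fun i => LinearMap.ofIsCompl_eq hSC (fun _ => rfl) (fun _ => rfl)) rfl
  right_inv z := by
    ext <;> simp

lemma card_tupleStratum [FiniteDimensional K V] (S : Submodule K V) :
    Nat.card (TupleStratum K d r S) =
      Nat.card K ^ (d * finrank K V * (finrank K V - finrank K S)) *
        fullSpanCount K d r (finrank K S) := by
  obtain ⟨C, hSC⟩ := S.exists_isCompl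
  have hC : finrank K C = finrank K V - finrank K S := by
    have := Submodule.finrank_add_eq_of_isCompl hSC
    omega
  rw [Nat.card_congr (tupleStratumEquiv hSC), Nat.card_prod, card_tupleStratum_top rfl,
    Nat.card_fun, natCard_eq_pow_finrank (K := K), finrank_linearMap, hC,
    Nat.card_fin, ← pow_mul]
  ring_nf

end TupleStratum

section Counting

variable {K V : Type*} [Field K] [AddCommGroup V] [Module K V] [FiniteDimensional K V]

lemma card_tuples (d r : ℕ) :
    Nat.card ((Fin d → Module.End K V) × (Fin r → V)) =
      Nat.card K ^ (d * finrank K V ^ 2 + r * finrank K V) := by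
  rw [natCard_eq_pow_finrank (K := K), finrank_prod, finrank_pi_fintype,
    finrank_pi_fintype, finrank_linearMap]
  simp [sq]

lemma card_tuples_eq_sum_card_tupleStratum [Finite K] [Fintype (Submodule K V)] (d r : ℕ) :
    Nat.card ((Fin d → Module.End K V) × (Fin r → V)) =
      ∑ S : Submodule K V, Nat.card (TupleStratum K d r S) := by
  have : Finite ((Fin d → Module.End K V) × (Fin r → V)) := finite_of_finite K
  rw [← Nat.card_sigma, Nat.card_congr (Equiv.sigmaFiberEquiv _)]

lemma sum_submodule_eq_sum_range_finrank {M : Type*} [AddCommMonoid M] [Fintype (Submodule K V)]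
    (f : ℕ → M) :
    ∑ S : Submodule K V, f (finrank K S) =
      ∑ k ∈ Finset.range (finrank K V + 1),
        Nat.card {S : Submodule K V // finrank K S = k} • f k := by
  classical
  rw [← Finset.sum_fiberwise_of_maps_to (t := Finset.range (finrank K V + 1))
    (g := fun S : Submodule K V => finrank K S)
    fun S _ => Finset.mem_range_succ_iff.mpr (Submodule.finrank_le S)]
  refine Finset.sum_congr rfl fun k _ => ?_
  rw [Finset.sum_congr rfl fun S hS => by rw [(Finset.mem_filter.mp hS).2], Finset.sum_const,
    Nat.card_eq_fintype_card, Fintype.card_subtype]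

end Counting

theorem stmt_6_general {K : Type*} [Field K] [Fintype K] {q d r n : ℕ}
    (hq : Fintype.card K = q) :
    q ^ (d * n ^ 2 + r * n) =
      ∑ k ∈ Finset.range (n + 1),
        Nat.card {Λ : Submodule K (Fin n → K) // Module.finrank K Λ = k} *
          q ^ (d * n * (n - k)) * fullSpanCount K d r k := by
  have := Fintype.ofFinite (Submodule K (Fin n → K))
  rw [← Nat.card_eq_fintype_card] at hq
  calc q ^ (d * n ^ 2 + r * n)
      = Nat.card ((Fin d → Module.End K (Fin n → K)) × (Fin r → Fin n → K)) := by
        rw [card_tuples, finrank_fin_fun, hq]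
    _ = ∑ S : Submodule K (Fin n → K),
          q ^ (d * n * (n - finrank K S)) * fullSpanCount K d r (finrank K S) := by
        simp only [card_tuples_eq_sum_card_tupleStratum, card_tupleStratum, finrank_fin_fun, hq]
    _ = _ := by
        rw [sum_submodule_eq_sum_range_finrank
          (fun k => q ^ (d * n * (n - k)) * fullSpanCount K d r k), finrank_fin_fun]
        simp only [smul_eq_mul, mul_assoc]

/-- Point-count of the stratification of `End(K^n)^d × (K^n)^r` by the dimension of the span:
`q^(dn²+rn) = Σ_{k=0}^n c_q(k,n) · q^(d·n·(n-k)) · u_k`. -/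
theorem stmt_6 {K : Type*} [Field K] [Fintype K] {q d r n : ℕ}
    (hq : Fintype.card K = q) (hd : 1 ≤ d) (hr : 1 ≤ r) :
    q ^ (d * n ^ 2 + r * n) =
      ∑ k ∈ Finset.range (n + 1),
        Nat.card {Λ : Submodule K (Fin n → K) // Module.finrank K Λ = k} *
          q ^ (d * n * (n - k)) * fullSpanCount K d r k :=
  stmt_6_general hq
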